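/- Under assumptions (H) on f, the function x ↦ |Ξ_f(x)|/x is integrable on (0,∞), i.e. ∫_0^∞ |Ξ_f(x)|/x dx < ∞. -/

import Mathlib

/-!
For `x ≤ 1`, Poisson summation gives `Θ_f(x) = x⁻¹ ∑_m f̂(m/x)`, whose `m = 0` term is exactly
`f̂(0)/x`; so `Ξ_f(x) = x⁻¹ ∑_{m ≠ 0} f̂(m/x)`, and since two integrations by parts give
`|f̂(ξ)| ≤ C ξ⁻²`, this is `O(x)`. For `x > 1` the `k = 0` term of `Θ_f(x)` is `f(0)` and
`|f(kx)| ≤ M |kx|^{-α} ≤ M x⁻¹ |k|^{-α}` for `k ≠ 0`, so `Ξ_f(x) = O(1/x)`. Hence `|Ξ_f(x)|/x` is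
bounded on `(0, 1]` and `O(x⁻²)` on `(1, ∞)`.
-/

open Real MeasureTheory Filter Set Asymptotics FourierTransform

/-- `Ξ_f(x) = Θ_f(x) - f(0)·1_{x>1} - f̂(0)/x`, where `Θ_f(x) = ∑_{k∈ℤ} f(kx)`
and `f̂(0) = ∫ f`. -/
noncomputable def Xi (f : ℝ → ℂ) (x : ℝ) : ℂ :=
  (∑' k : ℤ, f (k * x)) - (if 1 < x then f 0 else 0) - (∫ y : ℝ, f y) / (x : ℂ)

section Decay

variable {E : Type*} [NormedAddCommGroup E] {f : ℝ → E} {M α : ℝ}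

lemma norm_le_mul_abs_rpow_neg (hM : 0 ≤ M) (hα : 0 ≤ α)
    (hbound : ∀ x, ‖f x‖ ≤ M / (1 + |x|) ^ α) {x : ℝ} (hx : x ≠ 0) :
    ‖f x‖ ≤ M * |x| ^ (-α) := by
  have hx' : 0 < |x| := abs_pos.2 hx
  calc ‖f x‖ ≤ M / (1 + |x|) ^ α := hbound x
    _ ≤ M / |x| ^ α :=
      div_le_div_of_nonneg_left hM (rpow_pos_of_pos hx' α) (rpow_le_rpow hx'.le (by linarith) hα)
    _ = M * |x| ^ (-α) := by rw [rpow_neg hx'.le, div_eq_mul_inv]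

lemma integrable_of_norm_le_div_one_add_abs_rpow (hf : AEStronglyMeasurable f) (hα : 1 < α)
    (hbound : ∀ x, ‖f x‖ ≤ M / (1 + |x|) ^ α) : Integrable f := by
  refine ((integrable_one_add_norm (E := ℝ) (by simpa using hα)).const_mul M).mono' hf
    (ae_of_all _ fun x => ?_)
  rw [norm_eq_abs, rpow_neg (by positivity), ← div_eq_mul_inv]
  exact hbound x

end Decay

section Asymptotics

variable {F : Type*} [Norm F] {g : ℝ → F} {a b : ℝ}

lemma isBigO_cocompact_abs_rpow_neg_of_le (hba : b ≤ a) :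
    (fun x : ℝ => |x| ^ (-a)) =O[cocompact ℝ] (|·| ^ (-b)) := by
  refine IsBigO.of_bound' ?_
  filter_upwards [tendsto_norm_cocompact_atTop.eventually_ge_atTop 1] with x hx
  simp only [norm_eq_abs, abs_of_nonneg (rpow_nonneg (abs_nonneg x) _)]
  exact rpow_le_rpow_of_exponent_le hx (by linarith)

lemma isBigO_cocompact_abs_rpow_neg_of_norm_le {C : ℝ} (h : ∀ x ≠ 0, ‖g x‖ ≤ C * |x| ^ (-a)) :
    g =O[cocompact ℝ] (|·| ^ (-a)) := by
  refine IsBigO.of_bound C ?_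
  filter_upwards [tendsto_norm_cocompact_atTop.eventually_ge_atTop 1] with x hx
  rw [norm_eq_abs (|x| ^ (-a)), abs_of_nonneg (rpow_nonneg (abs_nonneg x) _)]
  exact h x (norm_pos_iff.1 (by linarith))

lemma Asymptotics.IsBigO.comp_mul_left_abs_rpow_neg (hg : g =O[cocompact ℝ] (|·| ^ (-b)))
    {c : ℝ} (hc : c ≠ 0) : (fun t => g (c * t)) =O[cocompact ℝ] (|·| ^ (-b)) := by
  refine (hg.comp_tendsto (tendsto_cocompact_mul_left₀ hc)).trans ?_
  have hscale : ((|·| ^ (-b)) ∘ fun t : ℝ => c * t) = fun t => |c| ^ (-b) * |t| ^ (-b) := by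
    ext t
    simp only [Function.comp, abs_mul, mul_rpow (abs_nonneg c) (abs_nonneg t)]
  rw [hscale]
  exact (isBigO_refl _ _).const_mul_left _

end Asymptotics

section Fourier

variable {E : Type*} [NormedAddCommGroup E] [NormedSpace ℂ E] {f : ℝ → E}

lemma norm_fourier_le_of_contDiff_two (hf : ContDiff ℝ 2 f) (hint : Integrable f)
    (hf' : Integrable (deriv f)) (hf'' : Integrable (deriv (deriv f))) {ξ : ℝ} (hξ : ξ ≠ 0) :
    ‖𝓕 f ξ‖ ≤ (∫ y, ‖deriv (deriv f) y‖) / (2 * π) ^ 2 * |ξ| ^ (-2 : ℝ) := by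
  have hdiff : Differentiable ℝ f := hf.differentiable two_ne_zero
  have hdiff' : Differentiable ℝ (deriv f) :=
    ((contDiff_succ_iff_deriv (n := 1)).mp hf).2.2.differentiable one_ne_zero
  have hfourier : 𝓕 (deriv (deriv f)) ξ = (2 * π * Complex.I * ξ) ^ 2 • 𝓕 f ξ := by
    simp only [fourier_deriv hf' hdiff' hf'', fourier_deriv hint hdiff hf', smul_smul, sq]
  have hnorm : ‖(2 * π * Complex.I * ξ) ^ 2‖ = (2 * π) ^ 2 * |ξ| ^ (2 : ℝ) := by
    simp [abs_of_pos pi_pos, mul_pow]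
  have hpos : 0 < (2 * π) ^ 2 * |ξ| ^ (2 : ℝ) := by positivity
  have hkey : (2 * π) ^ 2 * |ξ| ^ (2 : ℝ) * ‖𝓕 f ξ‖ ≤ ∫ y, ‖deriv (deriv f) y‖ := by
    rw [← hnorm, ← norm_smul, ← hfourier]
    exact VectorFourier.norm_fourierIntegral_le_integral_norm _ _ _ _ _
  rw [rpow_neg (abs_nonneg ξ), ← div_eq_mul_inv, div_div, le_div_iff₀ hpos]
  linarith

lemma fourier_comp_mul_left (f : ℝ → E) {c : ℝ} (hc : c ≠ 0) (ξ : ℝ) :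
    𝓕 (fun t => f (c * t)) ξ = |c|⁻¹ • 𝓕 f (ξ / c) := by
  have hphase : ∀ t : ℝ, 𝐞 (-(t * ξ)) • f (c * t) = 𝐞 (-(c * t * (ξ / c))) • f (c * t) := by
    intro t
    rw [mul_comm c t, mul_assoc, mul_div_cancel₀ _ hc]
  simp_rw [fourier_real_eq, hphase]
  rw [Measure.integral_comp_mul_left (fun u => 𝐞 (-(u * (ξ / c))) • f u), abs_inv]

end Fourier

lemma tsum_comp_mul_eq_tsum_fourier {f : ℝ → ℂ} (hc : Continuous f) {b : ℝ} (hb : 1 < b)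
    (hf : f =O[cocompact ℝ] (|·| ^ (-b))) (hFf : (𝓕 f) =O[cocompact ℝ] (|·| ^ (-b)))
    {x : ℝ} (hx : x ≠ 0) :
    ∑' k : ℤ, f (k * x) = |x|⁻¹ • ∑' m : ℤ, 𝓕 f (m / x) := by
  set g : ℝ → ℂ := fun t => f (x * t)
  have hFg : 𝓕 g = fun ξ => |x|⁻¹ • 𝓕 f (ξ / x) := funext (fourier_comp_mul_left f hx)
  have hFgO : (𝓕 g) =O[cocompact ℝ] (|·| ^ (-b)) := by
    rw [hFg]
    simp_rw [div_eq_inv_mul]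
    exact (hFf.comp_mul_left_abs_rpow_neg (inv_ne_zero hx)).const_smul_left (|x|⁻¹ : ℝ)
  have hpoisson : ∑' n : ℤ, g (0 + n) = ∑' n : ℤ, 𝓕 g n * fourier n ((0 : ℝ) : UnitAddCircle) :=
    tsum_eq_tsum_fourier_of_rpow_decay (hc.comp (continuous_const_mul x)) hb
    (hf.comp_mul_left_abs_rpow_neg hx) hFgO 0
  simp only [g, hFg, zero_add, QuotientAddGroup.mk_zero, fourier_eval_zero, mul_one] at hpoisson
  simp_rw [mul_comm _ x, hpoisson, tsum_const_smul'']

section IntegerSums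

variable {E : Type*} [NormedAddCommGroup E] {g : ℤ → E} {c p : ℝ}

lemma summable_of_norm_le_abs_rpow_neg [CompleteSpace E] (hp : 1 < p)
    (hg : ∀ k ≠ 0, ‖g k‖ ≤ c * |(k : ℝ)| ^ (-p)) : Summable g :=
  ((summable_abs_int_rpow hp).mul_left c).of_norm_bounded_eventually
    ((eventually_cofinite_ne 0).mono hg)

lemma norm_tsum_sub_zero_le [CompleteSpace E] (hp : 1 < p)
    (hg : ∀ k ≠ 0, ‖g k‖ ≤ c * |(k : ℝ)| ^ (-p)) :
    ‖∑' k, g k - g 0‖ ≤ c * ∑' k : ℤ, |(k : ℝ)| ^ (-p) := by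
  have hg' : ∀ k, ‖Function.update g 0 0 k‖ ≤ c * |(k : ℝ)| ^ (-p) := by
    intro k
    rcases eq_or_ne k 0 with rfl | hk
    · simp [zero_rpow (by linarith : -p ≠ 0)]
    · simpa [hk] using hg k hk
  have hsum : ∑' k, g k - g 0 = ∑' k, Function.update g 0 0 k := by
    rw [((summable_of_norm_le_abs_rpow_neg hp hg).hasSum.update 0 0).tsum_eq]
    abel
  rw [hsum, ← tsum_mul_left]
  exact tsum_of_norm_bounded ((summable_abs_int_rpow hp).mul_left c).hasSum hg'

end IntegerSums

lemma norm_xi_le_of_le_one {f : ℝ → ℂ} (hc : Continuous f) {b C : ℝ} (hb : 1 < b) (hb2 : b ≤ 2)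
    (hf : f =O[cocompact ℝ] (|·| ^ (-b))) (hF : ∀ ξ ≠ 0, ‖𝓕 f ξ‖ ≤ C * |ξ| ^ (-2 : ℝ))
    {x : ℝ} (hx0 : 0 < x) (hx1 : x ≤ 1) :
    ‖Xi f x‖ ≤ C * (∑' m : ℤ, |(m : ℝ)| ^ (-2 : ℝ)) * x := by
  have hFf : (𝓕 f) =O[cocompact ℝ] (|·| ^ (-b)) :=
    (isBigO_cocompact_abs_rpow_neg_of_norm_le hF).trans (isBigO_cocompact_abs_rpow_neg_of_le hb2)
  have hxi : Xi f x = x⁻¹ • (∑' m : ℤ, 𝓕 f (m / x) - 𝓕 f ((0 : ℤ) / x)) := by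
    have hF0 : 𝓕 f ((0 : ℤ) / x) = ∫ y, f y := by simp [fourier_real_eq]
    rw [Xi, tsum_comp_mul_eq_tsum_fourier hc hb hf hFf hx0.ne', if_neg hx1.not_gt,
      abs_of_pos hx0, hF0, smul_sub, Complex.real_smul, Complex.real_smul, div_eq_inv_mul]
    push_cast
    ring
  have hterm : ∀ m : ℤ, m ≠ 0 → ‖𝓕 f (m / x)‖ ≤ C * x ^ 2 * |(m : ℝ)| ^ (-2 : ℝ) := by
    intro m hm
    calc ‖𝓕 f (m / x)‖ ≤ C * |m / x| ^ (-2 : ℝ) :=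
          hF _ (div_ne_zero (Int.cast_ne_zero.2 hm) hx0.ne')
      _ = C * x ^ 2 * |(m : ℝ)| ^ (-2 : ℝ) := by
          rw [abs_div, abs_of_pos hx0, div_rpow (abs_nonneg _) hx0.le, rpow_neg hx0.le, rpow_two]
          field_simp
  calc ‖Xi f x‖ = x⁻¹ * ‖∑' m : ℤ, 𝓕 f (m / x) - 𝓕 f ((0 : ℤ) / x)‖ := by
        rw [hxi, norm_smul, norm_inv, norm_of_nonneg hx0.le]
    _ ≤ x⁻¹ * (C * x ^ 2 * ∑' m : ℤ, |(m : ℝ)| ^ (-2 : ℝ)) := by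
        gcongr
        exact norm_tsum_sub_zero_le one_lt_two hterm
    _ = C * (∑' m : ℤ, |(m : ℝ)| ^ (-2 : ℝ)) * x := by
        field_simp

lemma norm_xi_le_of_one_lt {f : ℝ → ℂ} {M α : ℝ} (hM : 0 ≤ M) (hα : 1 < α)
    (hbound : ∀ x, ‖f x‖ ≤ M / (1 + |x|) ^ α) {x : ℝ} (hx : 1 < x) :
    ‖Xi f x‖ ≤ (M * ∑' k : ℤ, |(k : ℝ)| ^ (-α) + ‖∫ y, f y‖) / x := by
  have hx0 : 0 < x := by linarith
  have hterm : ∀ k : ℤ, k ≠ 0 → ‖f (k * x)‖ ≤ M * x⁻¹ * |(k : ℝ)| ^ (-α) := by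
    intro k hk
    calc ‖f (k * x)‖ ≤ M * |k * x| ^ (-α) :=
          norm_le_mul_abs_rpow_neg hM (by linarith) hbound
            (mul_ne_zero (Int.cast_ne_zero.2 hk) hx0.ne')
      _ = M * x ^ (-α) * |(k : ℝ)| ^ (-α) := by
          rw [abs_mul, mul_rpow (abs_nonneg _) (abs_nonneg _), abs_of_pos hx0]
          ring
      _ ≤ M * x⁻¹ * |(k : ℝ)| ^ (-α) := by
          gcongr
          rw [← rpow_neg_one]
          exact rpow_le_rpow_of_exponent_le hx.le (by linarith)
  have hxi : Xi f x = (∑' k : ℤ, f (k * x) - f ((0 : ℤ) * x)) - (∫ y, f y) / x := by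
    simp [Xi, if_pos hx]
  calc ‖Xi f x‖ ≤ ‖∑' k : ℤ, f (k * x) - f ((0 : ℤ) * x)‖ + ‖(∫ y, f y) / (x : ℂ)‖ := by
        rw [hxi]
        exact norm_sub_le _ _
    _ ≤ M * x⁻¹ * ∑' k : ℤ, |(k : ℝ)| ^ (-α) + ‖∫ y, f y‖ / x := by
        rw [norm_div, Complex.norm_real, norm_of_nonneg hx0.le]
        gcongr
        exact norm_tsum_sub_zero_le hα hterm
    _ = (M * ∑' k : ℤ, |(k : ℝ)| ^ (-α) + ‖∫ y, f y‖) / x := by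
        field_simp

lemma measurable_xi {f : ℝ → ℂ} (hf : Measurable f) : Measurable (Xi f) :=
  ((Measurable.tsum fun k : ℤ => hf.comp (measurable_const_mul (k : ℝ))).sub
    (Measurable.ite measurableSet_Ioi measurable_const measurable_const)).sub
    (measurable_const.div Complex.measurable_ofReal)

lemma integrableOn_Ioi_zero_of_norm_le {E : Type*} [NormedAddCommGroup E] {g : ℝ → E}
    {A B p : ℝ} (hp : 1 < p) (hg : AEStronglyMeasurable g (volume.restrict (Ioi 0)))
    (hsmall : ∀ x ∈ Ioc 0 1, ‖g x‖ ≤ A) (hlarge : ∀ x ∈ Ioi 1, ‖g x‖ ≤ B * x ^ (-p)) :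
    IntegrableOn g (Ioi 0) := by
  rw [← Ioc_union_Ioi_eq_Ioi zero_le_one]
  refine IntegrableOn.union ?_ ?_
  · exact (integrableOn_const (C := A) measure_Ioc_lt_top.ne).mono'
      (hg.mono_set Ioc_subset_Ioi_self)
      ((ae_restrict_iff' measurableSet_Ioc).2 (ae_of_all _ hsmall))
  · exact ((integrableOn_Ioi_rpow_of_lt (by linarith) one_pos).const_mul B).mono'
      (hg.mono_set (Ioi_subset_Ioi zero_le_one))
      ((ae_restrict_iff' measurableSet_Ioi).2 (ae_of_all _ hlarge))

theorem xi_integrable (f : ℝ → ℂ) (hf : ContDiff ℝ 2 f)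
    (hf' : Integrable (deriv f)) (hf'' : Integrable (deriv (deriv f)))
    (M α : ℝ) (hM : 0 < M) (hα : 1 < α)
    (hbound : ∀ x : ℝ, ‖f x‖ ≤ M / (1 + |x|) ^ α) :
    IntegrableOn (fun x : ℝ => ‖Xi f x‖ / x) (Set.Ioi 0) := by
  have hint : Integrable f :=
    integrable_of_norm_le_div_one_add_abs_rpow hf.continuous.aestronglyMeasurable hα hbound
  -- Poisson summation needs one exponent for both `f` and `𝓕 f = O(|ξ|⁻²)`.
  have hdecay : f =O[cocompact ℝ] (|·| ^ (-min α 2)) :=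
    (isBigO_cocompact_abs_rpow_neg_of_norm_le fun _ hx =>
      norm_le_mul_abs_rpow_neg hM.le (by linarith) hbound hx).trans
      (isBigO_cocompact_abs_rpow_neg_of_le (min_le_left _ _))
  refine integrableOn_Ioi_zero_of_norm_le
    (A := (∫ y, ‖deriv (deriv f) y‖) / (2 * π) ^ 2 * ∑' m : ℤ, |(m : ℝ)| ^ (-2 : ℝ))
    (B := M * ∑' k : ℤ, |(k : ℝ)| ^ (-α) + ‖∫ y, f y‖) one_lt_two
    ((measurable_xi hf.continuous.measurable).norm.div measurable_id).aestronglyMeasurable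
    (fun x hx => ?_) (fun x hx => ?_)
  · have hsmall := norm_xi_le_of_le_one hf.continuous (lt_min hα one_lt_two) (min_le_right _ _)
      hdecay (fun ξ hξ => norm_fourier_le_of_contDiff_two hf hint hf' hf'' hξ) hx.1 hx.2
    rw [norm_of_nonneg (div_nonneg (norm_nonneg _) hx.1.le)]
    exact (div_le_iff₀ hx.1).2 hsmall
  · have hx0 : (0 : ℝ) < x := zero_lt_one.trans hx
    have hlarge := norm_xi_le_of_one_lt hM.le hα hbound hx
    rw [norm_of_nonneg (by positivity), rpow_neg hx0.le, rpow_two, div_le_iff₀ hx0]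
    exact hlarge.trans_eq (by field_simp)
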